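/- arXiv:2009.01384 — 2 statements merged into one kernel-verified Lean document; each statement's English description precedes it below -/
import Mathlib

section
/- Let k be a field and α : k[T1,T2] → k a linear functional. Then α is recognizable if and only if the linear map h : k[T1,T2] → k[T1,T2]* defined by h(z)(f) = α(z·f) has finite rank, i.e., the range of h is a finite-dimensional k-vector space. (The matrix of h in the monomial bases is the Hankel matrix H_α whose ((m1,k1),(m2,k2))-entry is α_{m1+m2,k1+k2}; so α is recognizable if and only if the Hankel matrix H_α has finite rank.) -/
/-!
The kernel of `h` is `{z | ∀ f, α (z * f) = 0}`, which is the largest ideal contained in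
`ker α`. So `α` is recognizable iff `k[T₁,T₂] ⧸ ker h` is finite-dimensional, and this quotient
is isomorphic to `range h`.
-/

open MvPolynomial

/-- `α` is *recognizable* if some ideal of finite codimension is contained in its kernel. -/
def Recognizable (k : Type*) [Field k] (α : MvPolynomial (Fin 2) k →ₗ[k] k) : Prop :=
  ∃ I : Ideal (MvPolynomial (Fin 2) k),
    (∀ x ∈ I, α x = 0) ∧ FiniteDimensional k (MvPolynomial (Fin 2) k ⧸ I)

namespace LinearMap

variable {k A M : Type*} [CommRing k] [CommRing A] [Algebra k A] [AddCommGroup M] [Module k M]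

def kerIdeal (α : A →ₗ[k] M) : Ideal A where
  carrier := {z | ∀ f, α (z * f) = 0}
  add_mem' {a b} ha hb f := by rw [add_mul, map_add, ha f, hb f, add_zero]
  zero_mem' f := by rw [zero_mul, map_zero]
  smul_mem' c z hz f := by rw [smul_eq_mul, mul_assoc, mul_left_comm, hz]

variable (α : A →ₗ[k] M)

theorem mem_kerIdeal {z : A} : z ∈ α.kerIdeal ↔ ∀ f, α (z * f) = 0 := Iff.rfl

theorem le_kerIdeal_iff {I : Ideal A} : I ≤ α.kerIdeal ↔ ∀ x ∈ I, α x = 0 :=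
  ⟨fun hI x hx => by simpa using hI hx 1, fun hI z hz f => hI _ (I.mul_mem_right f hz)⟩

theorem restrictScalars_kerIdeal :
    α.kerIdeal.restrictScalars k = ker ((mul k A).compr₂ α) := by
  ext z
  simp only [Submodule.restrictScalars_mem, mem_kerIdeal, mem_ker, LinearMap.ext_iff,
    compr₂_apply, mul_apply', zero_apply]

theorem exists_ideal_finite_quotient_iff :
    (∃ I : Ideal A, (∀ x ∈ I, α x = 0) ∧ Module.Finite k (A ⧸ I)) ↔
      Module.Finite k (A ⧸ α.kerIdeal) := by
  refine ⟨fun ⟨I, hI, _⟩ => ?_, fun h => ⟨α.kerIdeal, (α.le_kerIdeal_iff).1 le_rfl, h⟩⟩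
  have hle : I ≤ α.kerIdeal := (α.le_kerIdeal_iff).2 hI
  exact Module.Finite.of_surjective (Ideal.Quotient.factorₐ k hle).toLinearMap
    (Ideal.Quotient.factor_surjective hle)

theorem finite_quotient_kerIdeal_iff :
    Module.Finite k (A ⧸ α.kerIdeal) ↔ Module.Finite k (range ((mul k A).compr₂ α)) := by
  rw [← Module.Finite.equiv_iff (Submodule.Quotient.restrictScalarsEquiv k α.kerIdeal),
    restrictScalars_kerIdeal]
  exact Module.Finite.equiv_iff (quotKerEquivRange _)

end LinearMap

/-- `α` is recognizable iff the linear map `h : k[T₁,T₂] → k[T₁,T₂]*`, `h(z)(f) = α(z·f)`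
(whose matrix in the monomial bases is the Hankel matrix of `α`) has finite rank. -/
theorem recognizable_iff_hankel_finite_rank (k : Type*) [Field k]
    (α : MvPolynomial (Fin 2) k →ₗ[k] k)
    (h : MvPolynomial (Fin 2) k →ₗ[k] (MvPolynomial (Fin 2) k →ₗ[k] k))
    (hh : ∀ z f, h z f = α (z * f)) :
    Recognizable k α ↔ Module.Finite k (LinearMap.range h) := by
  obtain rfl : h = (LinearMap.mul k _).compr₂ α := by ext z f; simp [hh]
  exact α.exists_ideal_finite_quotient_iff.trans α.finite_quotient_kerIdeal_iff
end

section
/- Let k be a field. Suppose (B, β, ψ) and (B', β', ψ') are two triples where B, B' are finite-dimensional commutative k-algebras, β : B → k and β' : B' → k are linear functionals whose associated bilinear forms (x,y) ↦ β(xy) and (x,y) ↦ β'(xy) are nondegenerate, and ψ : k[T1,T2] → B, ψ' : k[T1,T2] → B' are surjective k-algebra homomorphisms. If β ∘ ψ = β' ∘ ψ' as linear functionals on k[T1,T2], then there exists a k-algebra isomorphism φ : B → B' such that φ ∘ ψ = ψ' and β' ∘ φ = β. (Hence recognizable series are classified by isomorphism classes of data (B, g1, g2, β): a commutative Frobenius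 algebra B generated by two elements g1, g2 with a nondegenerate trace β.) -/
open MvPolynomial

/-!
Nondegeneracy of `(x, y) ↦ β (x * y)` means that `ψ z = 0` exactly when the functional
`β ∘ ψ` vanishes on the whole ideal generated by `z`. So `ker ψ` is determined by `β ∘ ψ`,
the two presentations have the same kernel, and `φ` is the composite
`B ≃ k[T₁,T₂] ⧸ ker ψ = k[T₁,T₂] ⧸ ker ψ' ≃ B'`.
-/

section

variable {k A B B' : Type*} [CommSemiring k] [Semiring A] [Algebra k A]
  [Semiring B] [Algebra k B] [Semiring B'] [Algebra k B']

theorem AlgHom.mem_ker_iff_forall_map_mul_eq_zero {β : B →ₗ[k] k}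
    (hβ : ∀ x : B, x ≠ 0 → ∃ y : B, β (x * y) ≠ 0) {ψ : A →ₐ[k] B}
    (hψ : Function.Surjective ψ) (z : A) :
    z ∈ RingHom.ker ψ ↔ ∀ w : A, β (ψ (z * w)) = 0 := by
  refine ⟨fun hz w => by rw [map_mul, (RingHom.mem_ker).1 hz, zero_mul, map_zero], fun h => ?_⟩
  by_contra hz
  obtain ⟨y, hy⟩ := hβ (ψ z) hz
  obtain ⟨w, rfl⟩ := hψ y
  exact hy (by rw [← map_mul, h w])

theorem AlgHom.ker_eq_of_comp_eq {β : B →ₗ[k] k} {β' : B' →ₗ[k] k}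
    (hβ : ∀ x : B, x ≠ 0 → ∃ y : B, β (x * y) ≠ 0)
    (hβ' : ∀ x : B', x ≠ 0 → ∃ y : B', β' (x * y) ≠ 0)
    {ψ : A →ₐ[k] B} {ψ' : A →ₐ[k] B'}
    (hψ : Function.Surjective ψ) (hψ' : Function.Surjective ψ')
    (hcomp : ∀ z : A, β (ψ z) = β' (ψ' z)) :
    RingHom.ker ψ = RingHom.ker ψ' := by
  ext z
  simp only [mem_ker_iff_forall_map_mul_eq_zero hβ hψ, mem_ker_iff_forall_map_mul_eq_zero hβ' hψ',
    hcomp]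

end

theorem AlgHom.exists_algEquiv_comp_eq_of_ker_eq {k A B B' : Type*} [CommSemiring k]
    [CommRing A] [Algebra k A] [Semiring B] [Algebra k B] [Semiring B'] [Algebra k B']
    {ψ : A →ₐ[k] B} {ψ' : A →ₐ[k] B'}
    (hψ : Function.Surjective ψ) (hψ' : Function.Surjective ψ')
    (hker : RingHom.ker ψ = RingHom.ker ψ') :
    ∃ φ : B ≃ₐ[k] B', ∀ z : A, φ (ψ z) = ψ' z := by
  let e := Ideal.quotientKerAlgEquivOfSurjective hψ
  let e' := Ideal.quotientKerAlgEquivOfSurjective hψ'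
  refine ⟨e.symm.trans ((Ideal.quotientEquivAlgOfEq k hker).trans e'), fun z => ?_⟩
  have he : ψ z = e (Ideal.Quotient.mk _ z) := rfl
  rw [he, AlgEquiv.trans_apply, AlgEquiv.symm_apply_apply]
  rfl

theorem frobenius_presentation_unique_general (k : Type*) [Field k]
    (B B' : Type*) [CommRing B] [Algebra k B]
    [CommRing B'] [Algebra k B']
    (β : B →ₗ[k] k) (β' : B' →ₗ[k] k)
    (hβ : ∀ x : B, x ≠ 0 → ∃ y : B, β (x * y) ≠ 0)
    (hβ' : ∀ x : B', x ≠ 0 → ∃ y : B', β' (x * y) ≠ 0)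
    (ψ : MvPolynomial (Fin 2) k →ₐ[k] B) (ψ' : MvPolynomial (Fin 2) k →ₐ[k] B')
    (hψ : Function.Surjective ψ) (hψ' : Function.Surjective ψ')
    (hcomp : ∀ z : MvPolynomial (Fin 2) k, β (ψ z) = β' (ψ' z)) :
    ∃ φ : B ≃ₐ[k] B', (∀ z : MvPolynomial (Fin 2) k, φ (ψ z) = ψ' z) ∧
      (∀ b : B, β' (φ b) = β b) := by
  obtain ⟨φ, hφ⟩ := AlgHom.exists_algEquiv_comp_eq_of_ker_eq hψ hψ'
    (AlgHom.ker_eq_of_comp_eq hβ hβ' hψ hψ' hcomp)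
  refine ⟨φ, hφ, fun b => ?_⟩
  obtain ⟨z, rfl⟩ := hψ b
  rw [hφ, hcomp]

/-- Two commutative Frobenius algebra presentations `(B, β, ψ)` and `(B', β', ψ')` of the
same functional `β ∘ ψ = β' ∘ ψ'` on `k[T₁,T₂]` are isomorphic: there is an algebra
isomorphism `φ : B ≃ B'` with `φ ∘ ψ = ψ'` and `β' ∘ φ = β`. -/
theorem frobenius_presentation_unique (k : Type*) [Field k]
    (B B' : Type*) [CommRing B] [Algebra k B] [FiniteDimensional k B]
    [CommRing B'] [Algebra k B'] [FiniteDimensional k B']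
    (β : B →ₗ[k] k) (β' : B' →ₗ[k] k)
    (hβ : ∀ x : B, x ≠ 0 → ∃ y : B, β (x * y) ≠ 0)
    (hβ' : ∀ x : B', x ≠ 0 → ∃ y : B', β' (x * y) ≠ 0)
    (ψ : MvPolynomial (Fin 2) k →ₐ[k] B) (ψ' : MvPolynomial (Fin 2) k →ₐ[k] B')
    (hψ : Function.Surjective ψ) (hψ' : Function.Surjective ψ')
    (hcomp : ∀ z : MvPolynomial (Fin 2) k, β (ψ z) = β' (ψ' z)) :
    ∃ φ : B ≃ₐ[k] B', (∀ z : MvPolynomial (Fin 2) k, φ (ψ z) = ψ' z) ∧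
      (∀ b : B, β' (φ b) = β b) :=
  frobenius_presentation_unique_general k B B' β β' hβ hβ' ψ ψ' hψ hψ' hcomp
end
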